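/- arXiv:2603.05292 — 5 statements merged into one kernel-verified Lean document; each statement's English description precedes it below -/
import Mathlib

section
/- Let m ≥ 1, let M be a matroid with ground set [m], and let u ∈ ℤ^m with Σ_{j=1}^m u_j = 1. Then Σ_π (−1)^{m − l(π)} · rk_M(A_π(u)), the sum taken over all flags π of subsets of [m], equals 1 if u = e_i for some non-loop i of M, and equals 0 otherwise. (Equivalently: the u-weight equivariant Euler characteristic of the tautological tropical vector bundle E_M on the permutahedral toric variety equals the rank h^0 of its u-weight space of global sections, i.e. higher cohomologies of E_M vanish.) -/
open scoped Classical

/-- A flag of subsets of `[m]`: a finite set of nonempty subsets of `Fin m`, totally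
ordered by inclusion, containing the full set `[m]`.  Its length is `π.card`. -/
def IsFlag (m : ℕ) (π : Finset (Finset (Fin m))) : Prop :=
  (∀ S ∈ π, S.Nonempty) ∧ Finset.univ ∈ π ∧ ∀ S ∈ π, ∀ T ∈ π, S ⊆ T ∨ T ⊆ S

/-- The rank of a set `X` in a matroid `M`: the largest cardinality of an
independent subset of `X`. -/
noncomputable def matroidRk {α : Type*} (M : Matroid α) (X : Set α) : ℕ :=
  sSup {n : ℕ | ∃ I, M.Indep I ∧ I ⊆ X ∧ I.ncard = n}

/-- The weight-`u` space of sections `H⁰(U_σ, E_M)_u = A_π(u)` of the tautological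
tropical vector bundle over the chart of the cone `σ` corresponding to the flag `π`:
those `i ∈ [m]` such that for every `S ∈ π`, `∑_{j∈S} u_j ≤ 1` if `i ∈ cl_M(S)` and
`∑_{j∈S} u_j ≤ 0` if `i ∉ cl_M(S)`. -/
def Aflag (m : ℕ) (M : Matroid (Fin m)) (u : Fin m → ℤ) (π : Finset (Finset (Fin m))) :
    Set (Fin m) :=
  {i | ∀ S ∈ π,
    if i ∈ M.closure (S : Set (Fin m)) then (∑ j ∈ S, u j) ≤ 1 else (∑ j ∈ S, u j) ≤ 0}

/-- The standard basis vector `e_i ∈ ℤ^m`. -/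
def stdVec (m : ℕ) (i : Fin m) : Fin m → ℤ := fun j => if j = i then 1 else 0


/-!
If some member of a flag `π` has `u`-sum at least `2`, then `A_π(u) = ∅`. Otherwise let `T` be
the smallest member of `π` with `∑_{j∈T} u_j = 1` (it exists because `∑_j u_j = 1`); then
`A_π(u) = cl_M(T)`. Grouping the flags by `T`, the signed number of flags with a given `T` is,
up to sign, the product of the alternating chain sums (reduced Euler characteristics) of the
poset `D_T = belowSets u T` of nonempty `S ⊂ T` with `∑_S u ≤ 0` and of the poset
`U_T = aboveSets u T` of `T ⊂ S ⊊ [m]` with `∑_S u ≤ 1`.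

If some `j ∈ T` has `u_j ≤ 0`, then `S ↦ S ∪ {j ∈ T | u_j ≤ 0}` maps `D_T` into itself, so its
order complex is contractible and the chain sum vanishes. Otherwise `T = {i}` with `u_i = 1`;
if moreover `u ≠ e_i`, then `S ↦ S ∩ ({i} ∪ {j | u_j ≤ 0})` maps `U_T` into itself and the chain
sum vanishes again. For `u = e_i` only `T = {i}` survives, `U_T` is the Boolean interval
`({i}, [m])`, whose chain sum is `(-1)^m`, and the total is `rk_M(cl_M {i})`.
-/

open Finset

namespace Finset

section PartialOrder

variable {β : Type*} [PartialOrder β]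

noncomputable def chains (P : Finset β) : Finset (Finset β) :=
  {C ∈ P.powerset | IsChain (· ≤ ·) (C : Set β)}

/-- The sum over all chains, the empty one included, is minus the reduced Euler characteristic
of the order complex of `P`; for an open interval `P = (a, b)` it is minus the Möbius function
`μ(a, b)`. -/
noncomputable def altChainSum (P : Finset β) : ℤ := ∑ C ∈ P.chains, (-1) ^ #C

variable {P A B C : Finset β} {z t : β}

theorem mem_chains : C ∈ P.chains ↔ C ⊆ P ∧ IsChain (· ≤ ·) (C : Set β) := by
  simp [chains]

@[simp] theorem altChainSum_empty : altChainSum (∅ : Finset β) = 1 := by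
  have : (∅ : Finset β).chains = {∅} := by
    ext C
    simp +contextual [mem_chains, subset_empty, IsChain]
  simp [altChainSum, this]

variable [DecidableEq β]

theorem notMem_of_mem_chains_erase (hC : C ∈ (P.erase z).chains) : z ∉ C := fun h =>
  (mem_erase.1 ((mem_chains.1 hC).1 h)).1 rfl

theorem filter_chains_notMem : {C ∈ P.chains | z ∉ C} = (P.erase z).chains := by
  ext C
  simp only [mem_filter, mem_chains, subset_erase]
  tauto

theorem sum_chains_mem_of_comparable {M : Type*} [AddCommMonoid M] (hz : z ∈ P)
    (hcomp : ∀ x ∈ P, z ≤ x ∨ x ≤ z) (f : Finset β → M) :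
    ∑ C ∈ P.chains with z ∈ C, f C = ∑ C ∈ (P.erase z).chains, f (insert z C) := by
  refine sum_nbij' (·.erase z) (insert z) (fun C hC => ?_) (fun C hC => ?_)
    (fun C hC => insert_erase (mem_filter.1 hC).2)
    (fun C hC => erase_insert (notMem_of_mem_chains_erase hC))
    (fun C hC => by rw [insert_erase (mem_filter.1 hC).2])
  · obtain ⟨hCP, hCch⟩ := mem_chains.1 (mem_filter.1 hC).1
    exact mem_chains.2 ⟨erase_subset_erase z hCP, hCch.mono (by simp)⟩
  · obtain ⟨hCP, hCch⟩ := mem_chains.1 hC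
    refine mem_filter.2 ⟨mem_chains.2 ⟨insert_subset hz (hCP.trans (erase_subset z P)), ?_⟩,
      mem_insert_self z C⟩
    rw [coe_insert]
    exact hCch.insert fun x hx _ => hcomp x (mem_of_mem_erase (hCP hx))

theorem sum_chains_mem_eq_neg_of_comparable (hz : z ∈ P) (hcomp : ∀ x ∈ P, z ≤ x ∨ x ≤ z) :
    ∑ C ∈ P.chains with z ∈ C, (-1 : ℤ) ^ #C = -altChainSum (P.erase z) := by
  rw [sum_chains_mem_of_comparable hz hcomp, altChainSum, ← sum_neg_distrib]
  refine sum_congr rfl fun C hC => ?_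
  rw [card_insert_of_notMem (notMem_of_mem_chains_erase hC), pow_succ, mul_neg_one]

theorem altChainSum_eq_zero_of_comparable (hz : z ∈ P) (hcomp : ∀ x ∈ P, z ≤ x ∨ x ≤ z) :
    altChainSum P = 0 := by
  rw [altChainSum, ← sum_filter_add_sum_filter_not _ (z ∈ ·),
    sum_chains_mem_eq_neg_of_comparable hz hcomp, filter_chains_notMem, ← altChainSum,
    neg_add_cancel]

theorem altChainSum_union (hAB : ∀ a ∈ A, ∀ b ∈ B, a < b) :
    altChainSum (A ∪ B) = altChainSum A * altChainSum B := by
  have hdisj : Disjoint A B := disjoint_left.2 fun a ha hb => lt_irrefl a (hAB a ha a hb)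
  rw [altChainSum, altChainSum, altChainSum, sum_mul_sum, ← sum_product']
  refine sum_nbij' (fun C => (C ∩ A, C ∩ B)) (fun p => p.1 ∪ p.2) (fun C hC => ?_)
    (fun p hp => ?_) (fun C hC => ?_) (fun p hp => ?_) (fun C hC => ?_)
  · obtain ⟨hCAB, hCch⟩ := mem_chains.1 hC
    exact mem_product.2 ⟨mem_chains.2 ⟨inter_subset_right, hCch.mono (by simp)⟩,
      mem_chains.2 ⟨inter_subset_right, hCch.mono (by simp)⟩⟩
  · obtain ⟨⟨hXA, hXch⟩, ⟨hYB, hYch⟩⟩ := And.imp mem_chains.1 mem_chains.1 (mem_product.1 hp)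
    refine mem_chains.2 ⟨union_subset_union hXA hYB, ?_⟩
    rw [coe_union]
    exact isChain_union.2 ⟨hXch, hYch, fun x hx y hy _ => Or.inl (hAB x (hXA hx) y (hYB hy)).le⟩
  · rw [← inter_union_distrib_left, inter_eq_left.2 (mem_chains.1 hC).1]
  · obtain ⟨hXA, hYB⟩ := And.imp (fun h => (mem_chains.1 h).1) (fun h => (mem_chains.1 h).1)
      (mem_product.1 hp)
    rw [union_inter_distrib_right, union_inter_distrib_right, inter_eq_left.2 hXA,
      inter_eq_left.2 hYB, disjoint_iff_inter_eq_empty.1 (hdisj.mono_right hYB).symm,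
      disjoint_iff_inter_eq_empty.1 (hdisj.mono_left hXA), union_empty, empty_union]
  · dsimp only
    rw [← pow_add, ← card_union_of_disjoint (hdisj.mono inter_subset_right inter_subset_right),
      ← inter_union_distrib_left, inter_eq_left.2 (mem_chains.1 hC).1]

theorem sum_chains_mem_eq_neg_mul (hz : z ∈ P) :
    ∑ C ∈ P.chains with z ∈ C, (-1 : ℤ) ^ #C =
      -(altChainSum {x ∈ P | x < z} * altChainSum {x ∈ P | z < x}) := by
  set Q := {x ∈ P | z ≤ x ∨ x ≤ z}
  have hchains : {C ∈ P.chains | z ∈ C} = {C ∈ Q.chains | z ∈ C} := by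
    ext C
    simp only [mem_filter, mem_chains, Q, subset_iff]
    exact ⟨fun ⟨⟨hCP, hCch⟩, hzC⟩ => ⟨⟨fun x hx => ⟨hCP hx, hCch.total hzC hx⟩, hCch⟩, hzC⟩,
      fun ⟨⟨hCQ, hCch⟩, hzC⟩ => ⟨⟨fun x hx => (hCQ hx).1, hCch⟩, hzC⟩⟩
  have hQ : Q.erase z = {x ∈ P | x < z} ∪ {x ∈ P | z < x} := by
    ext x
    simp only [mem_erase, mem_filter, mem_union, Q, lt_iff_le_and_ne]
    grind
  rw [hchains, sum_chains_mem_eq_neg_of_comparable (mem_filter.2 ⟨hz, Or.inl le_rfl⟩)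
    (fun x hx => (mem_filter.1 hx).2), hQ, altChainSum_union fun a ha b hb =>
      (mem_filter.1 ha).2.trans (mem_filter.1 hb).2]

theorem altChainSum_eq_erase_sub_mul (hz : z ∈ P) :
    altChainSum P =
      altChainSum (P.erase z) - altChainSum {x ∈ P | x < z} * altChainSum {x ∈ P | z < x} := by
  rw [altChainSum, ← sum_filter_add_sum_filter_not _ (z ∈ ·), sum_chains_mem_eq_neg_mul hz,
    filter_chains_notMem, ← altChainSum]
  ring

theorem sum_chains_mem_mem_of_comparable (hz : z ∈ P) (hcomp : ∀ x ∈ P, z ≤ x ∨ x ≤ z)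
    (ht : t ∈ P) (htz : t ≠ z) :
    ∑ C ∈ P.chains with z ∈ C ∧ t ∈ C, (-1 : ℤ) ^ #C =
      altChainSum {x ∈ P.erase z | x < t} * altChainSum {x ∈ P.erase z | t < x} := by
  rw [← filter_filter, sum_filter, sum_chains_mem_of_comparable hz hcomp,
    ← neg_neg (_ * _), ← sum_chains_mem_eq_neg_mul (mem_erase.2 ⟨htz, ht⟩), sum_filter,
    ← sum_neg_distrib]
  refine sum_congr rfl fun C hC => ?_
  rw [card_insert_of_notMem (notMem_of_mem_chains_erase hC), pow_succ, mul_neg_one]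
  simp only [mem_insert, htz, false_or]
  split_ifs <;> simp

end PartialOrder

/-- Induction on `P`: at an element `z` incomparable with `N`, both `P \ {z}` (with `N`) and the
part of `P` above `z` (with `z ⊔ N`) satisfy the hypothesis again. -/
theorem altChainSum_eq_zero_of_sup_mem {β : Type*} [SemilatticeSup β] [DecidableEq β]
    {P : Finset β} {N : β} (hN : N ∈ P) (hsup : ∀ x ∈ P, x ⊔ N ∈ P) : altChainSum P = 0 := by
  induction P using Finset.strongInduction generalizing N with
  | H P ih =>
  by_cases hcomp : ∀ x ∈ P, N ≤ x ∨ x ≤ N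
  · exact altChainSum_eq_zero_of_comparable hN hcomp
  push Not at hcomp
  obtain ⟨z, hzP, hNz, hzN⟩ := hcomp
  have herase : altChainSum (P.erase z) = 0 :=
    ih _ (erase_ssubset hzP) (mem_erase.2 ⟨fun h => hNz h.le, hN⟩) fun x hx =>
      mem_erase.2 ⟨fun h => hNz (h ▸ le_sup_right), hsup x (mem_of_mem_erase hx)⟩
  have habove : altChainSum {x ∈ P | z < x} = 0 := by
    refine ih _ (filter_ssubset.2 ⟨z, hzP, lt_irrefl z⟩)
      (mem_filter.2 ⟨hsup z hzP, left_lt_sup.2 hNz⟩) fun x hx => ?_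
    obtain ⟨hxP, hzx⟩ := mem_filter.1 hx
    rw [← sup_assoc, sup_of_le_left hzx.le]
    exact mem_filter.2 ⟨hsup x hxP, hzx.trans_le le_sup_left⟩
  rw [altChainSum_eq_erase_sub_mul hzP, herase, habove, mul_zero, sub_zero]

theorem altChainSum_eq_zero_of_inf_mem {β : Type*} [SemilatticeInf β] [DecidableEq β]
    {P : Finset β} {N : β} (hN : N ∈ P) (hinf : ∀ x ∈ P, x ⊓ N ∈ P) : altChainSum P = 0 := by
  have hdual : altChainSum (β := βᵒᵈ) P = altChainSum P :=
    sum_congr (filter_congr fun C _ => ⟨IsChain.symm, IsChain.symm⟩) fun _ _ => rfl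
  rw [← hdual]
  exact altChainSum_eq_zero_of_sup_mem (β := βᵒᵈ) hN hinf

section Boolean

variable {α : Type*} [DecidableEq α] {A B : Finset α} {b : α}

/-- `x ↦ x ∪ insert b A` maps `(A, B) \ {B.erase b}` into itself: `x ∪ {b} = B` would force
`B.erase b ⊆ x`. -/
theorem altChainSum_Ioo_erase_eq_zero (hbB : b ∈ B) (hAB : A ⊂ B.erase b) :
    altChainSum ((Ioo A B).erase (B.erase b)) = 0 := by
  have hbA : b ∉ A := fun h => notMem_erase b B (hAB.le h)
  have hbz : b ∉ B.erase b := notMem_erase b B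
  have hbA_B : insert b A ⊆ B := insert_subset hbB (hAB.le.trans (erase_subset b B))
  obtain ⟨c, hcz, hcA⟩ := exists_of_ssubset hAB
  refine altChainSum_eq_zero_of_sup_mem (N := insert b A) ?_ fun x hx => ?_
  · refine mem_erase.2 ⟨fun h => hbz (h ▸ mem_insert_self b A), mem_Ioo.2 ⟨ssubset_insert hbA,
      (ssubset_iff_of_subset hbA_B).2 ⟨c, mem_of_mem_erase hcz, ?_⟩⟩⟩
    simp [ne_of_mem_erase hcz, hcA]
  obtain ⟨hxz, hAx, hxB⟩ := And.imp_right mem_Ioo.1 (mem_erase.1 hx)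
  rw [sup_eq_union]
  refine mem_erase.2 ⟨fun h => hbz (h ▸ mem_union_right x (mem_insert_self b A)),
    mem_Ioo.2 ⟨hAx.trans_le subset_union_left, ?_⟩⟩
  refine (union_subset hxB.le hbA_B).ssubset_of_ne fun hB => ?_
  have hzx : B.erase b ⊆ x := fun y hy => by
    have hyB : y ∈ x ∪ insert b A := hB ▸ mem_of_mem_erase hy
    simp only [mem_union, mem_insert] at hyB
    rcases hyB with hyx | rfl | hyA
    · exact hyx
    · exact absurd hy hbz
    · exact hAx.le hyA
  exact (erase_covBy hbB).2 (hzx.ssubset_of_ne (Ne.symm hxz)) hxB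

theorem altChainSum_Ioo (hAB : A ⊂ B) : altChainSum (Ioo A B) = (-1) ^ (#(B \ A) + 1) := by
  induction B using Finset.strongInduction with
  | H B ih =>
  obtain ⟨b, hbB, hbA⟩ := exists_of_ssubset hAB
  set z := B.erase b
  have hzB : z ⋖ B := erase_covBy hbB
  have hcard : #(B \ A) = #(z \ A) + 1 := by
    have hb : b ∈ B \ A := mem_sdiff.2 ⟨hbB, hbA⟩
    rw [erase_sdiff_comm, card_erase_of_mem hb, Nat.sub_add_cancel (card_pos.2 ⟨b, hb⟩)]
  rcases (subset_erase.2 ⟨hAB.le, hbA⟩ : A ⊆ z).eq_or_ssubset with hAz | hAz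
  · have hIoo : Ioo A B = ∅ := by
      ext x
      simpa [mem_Ioo, hAz] using @hzB.2 x
    rw [hIoo, altChainSum_empty, hcard, hAz, sdiff_self, bot_eq_empty, card_empty]
    norm_num
  have hbelow : {x ∈ Ioo A B | x < z} = Ioo A z := by
    ext x
    simp only [mem_filter, mem_Ioo]
    exact ⟨fun ⟨⟨hAx, _⟩, hxz⟩ => ⟨hAx, hxz⟩, fun ⟨hAx, hxz⟩ => ⟨⟨hAx, hxz.trans hzB.lt⟩, hxz⟩⟩
  have habove : {x ∈ Ioo A B | z < x} = ∅ :=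
    filter_eq_empty_iff.2 fun x hx hzx => hzB.2 hzx (mem_Ioo.1 hx).2
  rw [altChainSum_eq_erase_sub_mul (mem_Ioo.2 ⟨hAz, hzB.lt⟩), altChainSum_Ioo_erase_eq_zero hbB hAz,
    filter_congr_decidable, hbelow, filter_congr_decidable, habove, altChainSum_empty,
    ih z hzB.lt hAz, hcard]
  ring

end Boolean

end Finset

section MatroidRank

variable {α : Type*} [Finite α] {M : Matroid α}

theorem matroidRk_eq_eRk (M : Matroid α) (X : Set α) : (matroidRk M X : ℕ∞) = M.eRk X := by
  obtain ⟨I, hI⟩ := M.exists_isBasis' X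
  have hmax : IsGreatest {n : ℕ | ∃ J, M.Indep J ∧ J ⊆ X ∧ J.ncard = n} I.ncard := by
    refine ⟨⟨I, hI.indep, hI.subset, rfl⟩, ?_⟩
    rintro _ ⟨J, hJ, hJX, rfl⟩
    have hle := hJ.encard_le_eRk_of_subset hJX
    rwa [← hI.encard_eq_eRk, ← J.toFinite.cast_ncard_eq, ← I.toFinite.cast_ncard_eq,
      Nat.cast_le] at hle
  rw [matroidRk, hmax.csSup_eq, I.toFinite.cast_ncard_eq, hI.encard_eq_eRk]

@[simp] theorem matroidRk_empty (M : Matroid α) : matroidRk M ∅ = 0 := by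
  rw [← Nat.cast_inj (R := ℕ∞), matroidRk_eq_eRk, M.eRk_empty, Nat.cast_zero]

theorem matroidRk_closure_singleton (hE : M.E = Set.univ) (i : α) :
    matroidRk M (M.closure {i}) = if i ∈ M.closure ∅ then 0 else 1 := by
  rw [← Nat.cast_inj (R := ℕ∞), matroidRk_eq_eRk, M.eRk_closure_eq]
  split_ifs with hi
  · rw [Nat.cast_zero, Matroid.eRk_eq_zero_iff', ← M.closure_empty]
    exact fun x hx => (Set.mem_singleton_iff.1 hx.1) ▸ hi
  · simpa using M.eRk_insert_eq_add_one (X := ∅) ⟨hE ▸ Set.mem_univ i, hi⟩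

end MatroidRank

theorem neg_one_pow_sub {k n : ℕ} (h : k ≤ n) : (-1 : ℤ) ^ (n - k) = (-1) ^ n * (-1) ^ k := by
  obtain ⟨d, rfl⟩ := Nat.exists_eq_add_of_le h
  rw [Nat.add_sub_cancel_left, pow_add, mul_right_comm, ← pow_add, Even.neg_one_pow ⟨k, rfl⟩,
    one_mul]

theorem stdVec_injective (m : ℕ) : Function.Injective (stdVec m) := fun i k h => by
  simpa [stdVec] using congrFun h i

theorem eq_stdVec_of_forall_ne {m : ℕ} {u : Fin m → ℤ} {i : Fin m} (hi : u i = 1)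
    (h : ∀ j ≠ i, u j = 0) : u = stdVec m i := funext fun j => by
  by_cases hj : j = i
  · simp [stdVec, hj, hi]
  · simp [stdVec, hj, h j hj]

section Flags

variable {m : ℕ} {u : Fin m → ℤ} {π : Finset (Finset (Fin m))} {S T : Finset (Fin m)}

theorem card_le_of_isFlag (hπ : IsFlag m π) : #π ≤ m := by
  have hinj : Set.InjOn card (π : Set (Finset (Fin m))) := fun S hS T hT h =>
    (hπ.2.2 S hS T hT).elim (fun hST => eq_of_subset_of_card_le hST h.ge)
      fun hTS => (eq_of_subset_of_card_le hTS h.le).symm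
  simpa using card_le_card_of_injOn card (t := Icc 1 m) (fun S hS => mem_Icc.2
    ⟨card_pos.2 (hπ.1 S hS), (card_le_univ S).trans_eq (Fintype.card_fin m)⟩) hinj

theorem isFlag_and_subset_iff {P : Finset (Finset (Fin m))} (hP : ∀ S ∈ P, S.Nonempty) :
    IsFlag m π ∧ π ⊆ P ↔ π ∈ P.chains ∧ univ ∈ π := by
  rw [mem_chains, IsFlag, IsChain, Set.Pairwise]
  simp only [mem_coe]
  refine ⟨fun ⟨⟨_, huniv, hch⟩, hπP⟩ => ⟨⟨hπP, fun S hS T hT _ => hch S hS T hT⟩, huniv⟩,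
    fun ⟨⟨hπP, hch⟩, huniv⟩ => ⟨⟨fun S hS => hP S (hπP hS), huniv, fun S hS T hT => ?_⟩, hπP⟩⟩
  by_cases hST : S = T
  · exact Or.inl hST.le
  · exact hch hS hT hST

/-- The members of flags `π ∋ T` with `A_π(u) = cl_M(T)`, for `T` with `∑_{j∈T} u_j = 1`. -/
def admissibleSets (u : Fin m → ℤ) (T : Finset (Fin m)) : Finset (Finset (Fin m)) :=
  {S | S.Nonempty ∧ (S ⊂ T ∧ ∑ j ∈ S, u j ≤ 0 ∨ T ⊆ S ∧ ∑ j ∈ S, u j ≤ 1)}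

def belowSets (u : Fin m → ℤ) (T : Finset (Fin m)) : Finset (Finset (Fin m)) :=
  {S | S.Nonempty ∧ S ⊂ T ∧ ∑ j ∈ S, u j ≤ 0}

def aboveSets (u : Fin m → ℤ) (T : Finset (Fin m)) : Finset (Finset (Fin m)) :=
  {S | T ⊂ S ∧ S ≠ univ ∧ ∑ j ∈ S, u j ≤ 1}

theorem mem_admissibleSets : S ∈ admissibleSets u T ↔
    S.Nonempty ∧ (S ⊂ T ∧ ∑ j ∈ S, u j ≤ 0 ∨ T ⊆ S ∧ ∑ j ∈ S, u j ≤ 1) := by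
  simp [admissibleSets]

theorem sum_le_one_of_mem_admissibleSets (h : S ∈ admissibleSets u T) : ∑ j ∈ S, u j ≤ 1 := by
  rcases (mem_admissibleSets.1 h).2 with ⟨-, h⟩ | ⟨-, h⟩ <;> omega

theorem subset_of_mem_admissibleSets (h : S ∈ admissibleSets u T) (hS : ∑ j ∈ S, u j = 1) :
    T ⊆ S := by
  rcases (mem_admissibleSets.1 h).2 with ⟨-, h⟩ | ⟨h, -⟩
  · omega
  · exact h

theorem aflag_eq_closure (M : Matroid (Fin m)) (hT : T ∈ π) (hπ : π ⊆ admissibleSets u T)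
    (hTu : ∑ j ∈ T, u j = 1) : Aflag m M u π = M.closure T := by
  ext i
  simp only [Aflag, Set.mem_ofPred_eq]
  refine ⟨fun hi => ?_, fun hi S hS => ?_⟩
  · by_contra hiT
    have := hi T hT
    rw [if_neg hiT] at this
    omega
  split_ifs with hiS
  · exact sum_le_one_of_mem_admissibleSets (hπ hS)
  rcases (mem_admissibleSets.1 (hπ hS)).2 with ⟨-, h⟩ | ⟨hTS, -⟩
  · exact h
  · exact absurd (M.closure_subset_closure (coe_subset.2 hTS) hi) hiS

theorem aflag_eq_empty (M : Matroid (Fin m)) (h : ∃ S ∈ π, 1 < ∑ j ∈ S, u j) :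
    Aflag m M u π = ∅ := by
  obtain ⟨S, hS, hS1⟩ := h
  refine Set.eq_empty_of_forall_notMem fun i hi => ?_
  have := hi S hS
  split_ifs at this <;> omega

/-- The witness is the smallest member `T` of `π` with `∑_{j∈T} u_j = 1`. -/
theorem exists_subset_admissibleSets (hπ : IsFlag m π) (hu : ∑ j, u j = 1)
    (hle : ∀ S ∈ π, ∑ j ∈ S, u j ≤ 1) :
    ∃ T ∈ π, ∑ j ∈ T, u j = 1 ∧ π ⊆ admissibleSets u T := by
  obtain ⟨T, hT, hTmin⟩ := exists_min_image {S ∈ π | ∑ j ∈ S, u j = 1} card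
    ⟨univ, mem_filter.2 ⟨hπ.2.1, hu⟩⟩
  obtain ⟨hTπ, hTu⟩ := mem_filter.1 hT
  refine ⟨T, hTπ, hTu, fun S hS => mem_admissibleSets.2 ⟨hπ.1 S hS, ?_⟩⟩
  by_cases hTS : T ⊆ S
  · exact Or.inr ⟨hTS, hle S hS⟩
  have hST : S ⊂ T := ((hπ.2.2 S hS T hTπ).resolve_right hTS).ssubset_of_not_subset hTS
  refine Or.inl ⟨hST, ?_⟩
  by_contra hS0
  have := hTmin S (mem_filter.2 ⟨hS, by linarith [hle S hS]⟩)
  exact absurd (card_lt_card hST) (not_lt.2 this)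

theorem matroidRk_aflag_eq_sum (M : Matroid (Fin m)) (hπ : IsFlag m π) (hu : ∑ j, u j = 1) :
    matroidRk M (Aflag m M u π) = ∑ T with ∑ j ∈ T, u j = 1 ∧ T ∈ π ∧ π ⊆ admissibleSets u T,
      matroidRk M (M.closure T) := by
  by_cases hle : ∀ S ∈ π, ∑ j ∈ S, u j ≤ 1
  · obtain ⟨T, hTπ, hTu, hπT⟩ := exists_subset_admissibleSets hπ hu hle
    rw [aflag_eq_closure M hTπ hπT hTu,
      sum_eq_single_of_mem T (mem_filter.2 ⟨mem_univ T, hTu, hTπ, hπT⟩)]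
    rintro T' hT' hne
    obtain ⟨hT'u, hT'π, hπT'⟩ := (mem_filter.1 hT').2
    exact absurd ((subset_of_mem_admissibleSets (hπT hT'π) hT'u).antisymm
      (subset_of_mem_admissibleSets (hπT' hTπ) hTu)).symm hne
  · push Not at hle
    obtain ⟨S, hS, hS1⟩ := hle
    rw [aflag_eq_empty M ⟨S, hS, hS1⟩, matroidRk_empty, eq_comm]
    exact sum_eq_zero fun T hT => absurd (sum_le_one_of_mem_admissibleSets
      ((mem_filter.1 hT).2.2.2 hS)) (not_le.2 hS1)

theorem sum_flags_mul_matroidRk_aflag (M : Matroid (Fin m)) (hu : ∑ j, u j = 1) :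
    ∑ π with IsFlag m π, (-1 : ℤ) ^ (m - #π) * (matroidRk M (Aflag m M u π) : ℤ) =
      ∑ T with ∑ j ∈ T, u j = 1, (matroidRk M (M.closure T) : ℤ) *
        ∑ π with IsFlag m π ∧ T ∈ π ∧ π ⊆ admissibleSets u T, (-1 : ℤ) ^ (m - #π) := by
  calc _ = ∑ π with IsFlag m π, ∑ T with ∑ j ∈ T, u j = 1,
        if T ∈ π ∧ π ⊆ admissibleSets u T then
          (-1 : ℤ) ^ (m - #π) * (matroidRk M (M.closure T) : ℤ) else 0 :=
        sum_congr rfl fun π hπ => by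
          rw [matroidRk_aflag_eq_sum M (mem_filter.1 hπ).2 hu, ← filter_filter, sum_filter,
            Nat.cast_sum, mul_sum]
          simp only [Nat.cast_ite, Nat.cast_zero, mul_ite, mul_zero]
    _ = _ := by
      rw [sum_comm]
      refine sum_congr rfl fun T _ => ?_
      rw [mul_sum, ← sum_filter, filter_filter]
      exact sum_congr rfl fun π _ => mul_comm _ _

theorem sum_flags_subset_eq_sum_chains {P : Finset (Finset (Fin m))} (hP : ∀ S ∈ P, S.Nonempty) :
    ∑ π with IsFlag m π ∧ T ∈ π ∧ π ⊆ P, (-1 : ℤ) ^ (m - #π) =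
      (-1) ^ m * ∑ C ∈ P.chains with univ ∈ C ∧ T ∈ C, (-1) ^ #C := by
  have hflags : ({π | IsFlag m π ∧ T ∈ π ∧ π ⊆ P} : Finset _) =
      {C ∈ P.chains | univ ∈ C ∧ T ∈ C} := by
    ext π
    have := isFlag_and_subset_iff (π := π) hP
    simp only [mem_filter, mem_univ, true_and]
    tauto
  rw [hflags, mul_sum]
  exact sum_congr rfl fun π hπ => neg_one_pow_sub (card_le_of_isFlag
    ((isFlag_and_subset_iff hP).2 ⟨(mem_filter.1 hπ).1, (mem_filter.1 hπ).2.1⟩).1)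

theorem sum_flags_admissibleSets_eq_altChainSum (hu : ∑ j, u j = 1) (hTu : ∑ j ∈ T, u j = 1) :
    ∑ π with IsFlag m π ∧ T ∈ π ∧ π ⊆ admissibleSets u T, (-1 : ℤ) ^ (m - #π) =
      (-1) ^ m * altChainSum (belowSets u T) *
        if T = univ then -1 else altChainSum (aboveSets u T) := by
  set P := admissibleSets u T
  have hT : T ∈ P := mem_admissibleSets.2
    ⟨nonempty_of_sum_ne_zero (f := u) (by omega), Or.inr ⟨subset_rfl, hTu.le⟩⟩
  have huniv : univ ∈ P := mem_admissibleSets.2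
    ⟨nonempty_of_sum_ne_zero (f := u) (by omega), Or.inr ⟨subset_univ T, hu.le⟩⟩
  have hcomp : ∀ S ∈ P, univ ≤ S ∨ S ≤ univ := fun S _ => Or.inr (subset_univ S)
  rw [sum_flags_subset_eq_sum_chains fun S hS => (mem_admissibleSets.1 hS).1, mul_assoc]
  congr 1
  split_ifs with hTuniv
  · subst hTuniv
    simp only [and_self]
    rw [sum_chains_mem_eq_neg_of_comparable huniv hcomp, mul_neg_one]
    congr 2
    ext S
    simp only [mem_erase, P, mem_admissibleSets, belowSets, mem_filter]
    grind
  · rw [sum_chains_mem_mem_of_comparable huniv hcomp hT hTuniv]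
    congr 2 <;> ext S <;>
      simp only [mem_filter, mem_erase, P, mem_admissibleSets, belowSets, aboveSets] <;> grind

theorem altChainSum_belowSets_eq_zero (hTu : ∑ j ∈ T, u j = 1) (hT : ∃ j ∈ T, u j ≤ 0) :
    altChainSum (belowSets u T) = 0 := by
  set N := {j ∈ T | u j ≤ 0}
  have hN (j) (hj : j ∈ N) : u j ≤ 0 := (mem_filter.1 hj).2
  have hNT : N ⊆ T := filter_subset _ T
  have hssubset {S : Finset (Fin m)} (hST : S ⊆ T) (hS : ∑ j ∈ S, u j ≤ 0) : S ⊂ T :=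
    hST.ssubset_of_ne fun h => by rw [h] at hS; omega
  refine altChainSum_eq_zero_of_sup_mem (N := N) ?_ fun S hS => ?_
  · obtain ⟨j, hjT, hj0⟩ := hT
    have hNsum : ∑ j ∈ N, u j ≤ 0 := sum_nonpos hN
    simpa [belowSets, hNsum, hssubset hNT hNsum] using ⟨j, mem_filter.2 ⟨hjT, hj0⟩⟩
  simp only [belowSets, mem_filter, mem_univ, true_and, sup_eq_union] at hS ⊢
  obtain ⟨hSne, hST, hS0⟩ := hS
  have hsum : ∑ j ∈ S ∪ N, u j ≤ 0 := (sum_le_sum_of_subset_of_nonpos' subset_union_left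
    fun j hj hjS => hN j ((mem_union.1 hj).resolve_left hjS)).trans hS0
  exact ⟨hSne.mono subset_union_left, hssubset (union_subset hST.le hNT) hsum, hsum⟩

theorem belowSets_singleton (u : Fin m → ℤ) (i : Fin m) : belowSets u {i} = ∅ :=
  filter_eq_empty_iff.2 fun _ _ ⟨hS, hSi, _⟩ => hS.ne_empty (ssubset_singleton_iff.1 hSi)

theorem eq_singleton_of_forall_pos (hTu : ∑ j ∈ T, u j = 1) (hpos : ∀ j ∈ T, 0 < u j) :
    ∃ i, T = {i} ∧ u i = 1 := by
  have hcard : (#T : ℤ) ≤ 1 := by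
    have := card_nsmul_le_sum T u 1 fun j hj => hpos j hj
    rwa [Nat.smul_one_eq_cast, hTu] at this
  obtain ⟨i, rfl⟩ := card_eq_one.1 (le_antisymm (by exact_mod_cast hcard)
    (card_pos.2 (nonempty_of_sum_ne_zero (f := u) (by omega))))
  exact ⟨i, rfl, by simpa using hTu⟩

theorem exists_pos_and_exists_neg_of_ne_stdVec {i : Fin m} (hu : ∑ j, u j = 1) (hi : u i = 1)
    (hne : u ≠ stdVec m i) : (∃ q ≠ i, 0 < u q) ∧ ∃ k ≠ i, u k < 0 := by
  have hrest : ∑ j ∈ univ.erase i, u j = 0 := by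
    have := sum_erase_add univ u (mem_univ i)
    omega
  have hzero (h : ∀ j ∈ univ.erase i, u j = 0) : u = stdVec m i :=
    eq_stdVec_of_forall_ne hi fun j hj => h j (mem_erase.2 ⟨hj, mem_univ j⟩)
  constructor
  · by_contra! h
    exact hne (hzero ((sum_eq_zero_iff_of_nonpos fun j hj => h j (ne_of_mem_erase hj)).1 hrest))
  · by_contra! h
    exact hne (hzero ((sum_eq_zero_iff_of_nonneg fun j hj => h j (ne_of_mem_erase hj)).1 hrest))

theorem exists_ne_nonpos_of_singleton_ssubset {i : Fin m} (hi : u i = 1) (hS : {i} ⊂ S)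
    (hS1 : ∑ j ∈ S, u j ≤ 1) : ∃ j ∈ S, j ≠ i ∧ u j ≤ 0 := by
  by_contra! h
  obtain ⟨j, hjS, hji⟩ := (ssubset_iff_of_subset hS.le).1 hS
  have hpos := sum_pos (fun x hx => h x (mem_of_mem_erase hx) (ne_of_mem_erase hx))
    ⟨j, mem_erase.2 ⟨by simpa using hji, hjS⟩⟩
  have := sum_erase_add S u (singleton_subset_iff.1 hS.le)
  omega

theorem altChainSum_aboveSets_eq_zero {i : Fin m} (hu : ∑ j, u j = 1) (hi : u i = 1)
    (hne : u ≠ stdVec m i) : altChainSum (aboveSets u {i}) = 0 := by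
  obtain ⟨⟨q, hqi, hq0⟩, ⟨k, hki, hk0⟩⟩ := exists_pos_and_exists_neg_of_ne_stdVec hu hi hne
  set N := insert i ({j | u j ≤ 0} : Finset (Fin m))
  have hN {j : Fin m} : j ∈ N ↔ j = i ∨ u j ≤ 0 := by simp [N]
  have hsingleton {X : Finset (Fin m)} (hiX : i ∈ X) {j : Fin m} (hjX : j ∈ X) (hji : j ≠ i) :
      {i} ⊂ X :=
    (ssubset_iff_of_subset (singleton_subset_iff.2 hiX)).2 ⟨j, hjX, by simpa using hji⟩
  refine altChainSum_eq_zero_of_inf_mem (N := N) ?_ fun S hS => ?_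
  · have hNsum : ∑ j ∈ N, u j ≤ 1 := by
      rw [sum_insert (by simp [hi]), hi]
      linarith [sum_nonpos fun j (hj : j ∈ ({j | u j ≤ 0} : Finset _)) => (mem_filter.1 hj).2]
    simp only [aboveSets, mem_filter, mem_univ, true_and]
    exact ⟨hsingleton (hN.2 (Or.inl rfl)) (hN.2 (Or.inr hk0.le)) hki,
      fun h => ((hN.1 (h ▸ mem_univ q)).resolve_left hqi).not_gt hq0, hNsum⟩
  simp only [aboveSets, mem_filter, mem_univ, true_and, inf_eq_inter] at hS ⊢
  obtain ⟨hiS, hSuniv, hS1⟩ := hS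
  obtain ⟨j, hjS, hji, hj0⟩ := exists_ne_nonpos_of_singleton_ssubset hi hiS hS1
  refine ⟨hsingleton (mem_inter.2 ⟨singleton_subset_iff.1 hiS.le, hN.2 (Or.inl rfl)⟩)
    (mem_inter.2 ⟨hjS, hN.2 (Or.inr hj0)⟩) hji,
    fun h => hSuniv (univ_subset_iff.1 (h ▸ inter_subset_left)), ?_⟩
  refine le_trans (sum_le_sum_of_subset_of_nonneg inter_subset_left fun x hxS hx => ?_) hS1
  have : ¬(x = i ∨ u x ≤ 0) := fun h => hx (mem_inter.2 ⟨hxS, hN.2 h⟩)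
  omega

theorem aboveSets_stdVec (i : Fin m) : aboveSets (stdVec m i) {i} = Ioo {i} univ := by
  ext S
  simp [aboveSets, stdVec, ssubset_univ_iff, apply_ite (· ≤ (1 : ℤ))]

theorem sum_flags_admissibleSets_eq_ite (hu : ∑ j, u j = 1) (hTu : ∑ j ∈ T, u j = 1) :
    ∑ π with IsFlag m π ∧ T ∈ π ∧ π ⊆ admissibleSets u T, (-1 : ℤ) ^ (m - #π) =
      if ∃ i, u = stdVec m i ∧ T = {i} then 1 else 0 := by
  rw [sum_flags_admissibleSets_eq_altChainSum hu hTu]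
  by_cases hpos : ∀ j ∈ T, 0 < u j
  swap
  · push Not at hpos
    rw [altChainSum_belowSets_eq_zero hTu hpos, mul_zero, zero_mul, if_neg]
    rintro ⟨i, rfl, rfl⟩
    simp [stdVec] at hpos
  obtain ⟨i, rfl, hi⟩ := eq_singleton_of_forall_pos hTu hpos
  have hiff : (∃ k, u = stdVec m k ∧ ({i} : Finset (Fin m)) = {k}) ↔ u = stdVec m i :=
    ⟨fun ⟨k, hk, hik⟩ => singleton_inj.1 hik ▸ hk, fun h => ⟨i, h, rfl⟩⟩
  rw [belowSets_singleton, altChainSum_empty, mul_one, if_congr hiff rfl rfl]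
  by_cases huniv : {i} = univ
  · have hm : m = 1 := by simpa using (congrArg card huniv).symm
    have hui : u = stdVec m i := eq_stdVec_of_forall_ne hi fun j hj =>
      absurd (huniv ▸ mem_univ j) (by simpa using hj)
    rw [if_pos huniv, if_pos hui, hm]
    norm_num
  rw [if_neg huniv]
  by_cases hui : u = stdVec m i
  · rw [if_pos hui, hui, aboveSets_stdVec, altChainSum_Ioo (ssubset_univ_iff.2 huniv),
      ← compl_eq_univ_sdiff, card_compl, card_singleton, Fintype.card_fin,
      Nat.sub_add_cancel i.pos, ← pow_add, Even.neg_one_pow ⟨m, rfl⟩]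
  · rw [if_neg hui, altChainSum_aboveSets_eq_zero hu hi hui, mul_zero]

end Flags

theorem tautological_euler_char_eq_h0_general (m : ℕ)
    (M : Matroid (Fin m)) (hE : M.E = Set.univ)
    (u : Fin m → ℤ) (hu : ∑ j, u j = 1) :
    ∑ π ∈ Finset.univ.filter (IsFlag m),
        (-1 : ℤ) ^ (m - π.card) * (matroidRk M (Aflag m M u π) : ℤ) =
      (if ∃ i : Fin m, i ∉ M.closure ∅ ∧ u = stdVec m i then 1 else 0) := by
  rw [sum_flags_mul_matroidRk_aflag M hu,
    sum_congr rfl fun T hT => by rw [sum_flags_admissibleSets_eq_ite hu (mem_filter.1 hT).2]]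
  by_cases h : ∃ i, u = stdVec m i
  · obtain ⟨i, rfl⟩ := h
    have hsum : ∑ j ∈ {i}, stdVec m i j = 1 := by simp [stdVec]
    rw [sum_eq_single_of_mem {i} (mem_filter.2 ⟨mem_univ _, hsum⟩) fun T _ hT => by
        rw [if_neg fun ⟨k, hk, hTk⟩ => hT (hTk.trans (stdVec_injective m hk ▸ rfl)), mul_zero],
      if_pos ⟨i, rfl, rfl⟩, mul_one, coe_singleton, matroidRk_closure_singleton hE]
    simp only [(stdVec_injective m).eq_iff, exists_eq_right']
    split_ifs <;> simp_all
  · rw [if_neg fun ⟨i, _, hi⟩ => h ⟨i, hi⟩]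
    exact sum_eq_zero fun T _ => by rw [if_neg fun ⟨i, hi, _⟩ => h ⟨i, hi⟩, mul_zero]

/-- Vanishing of higher cohomologies for the tautological tropical vector bundle of a
matroid `M` on `[m]`: for each `u ∈ ℤ^m` with `∑ u_j = 1`, the equivariant Euler
characteristic `χ(X_m, E_M)_u = ∑_π (-1)^{m-l(π)} rk_M(A_π(u))` equals `1` if
`u = e_i` for a non-loop `i`, and `0` otherwise (which is `h⁰(X_m, E_M)_u`). -/
theorem tautological_euler_char_eq_h0 (m : ℕ) (hm : 1 ≤ m)
    (M : Matroid (Fin m)) (hE : M.E = Set.univ)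
    (u : Fin m → ℤ) (hu : ∑ j, u j = 1) :
    ∑ π ∈ Finset.univ.filter (IsFlag m),
        (-1 : ℤ) ^ (m - π.card) * (matroidRk M (Aflag m M u π) : ℤ) =
      (if ∃ i : Fin m, i ∉ M.closure ∅ ∧ u = stdVec m i then 1 else 0) :=
  tautological_euler_char_eq_h0_general m M hE u hu
end

section
/- Let M be a matroid with ground set [m], let π be a flag of subsets of [m] with members ∅ ≠ S_1 ⊊ S_2 ⊊ ⋯ ⊊ S_l = [m], and let u ∈ ℤ^m with Σ_{j=1}^m u_j = 1. If Σ_{j∈S_k} u_j > 1 for some k, then rk_M(A_π(u)) = 0. Otherwise, letting t be the minimal index with Σ_{j∈S_t} u_j = 1 (which exists since Σ_{j∈S_l} u_j = 1), one has rk_M(A_π(u)) = rk_M(S_t). -/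
open scoped Classical

/-!
If some `S ∈ π` has `u`-sum `> 1`, the condition at `S` fails for every `i`, so `A_π(u) = ∅`.
Otherwise `A_π(u) = cl_M(S_t)`: the condition at `S_t` forces `i ∈ cl_M(S_t)`, and conversely
the only members of `π` on which `i ∈ cl_M(S_t)` could violate a condition are those with
`u`-sum `1` not containing `i` in their closure; but these contain `S_t` by minimality, since
`π` is a chain. The rank of a closure is the rank of the set.
-/

section matroidRk

variable {α : Type*} [Finite α] {M : Matroid α} {I X : Set α}

lemma matroidRk_eq_ncard_of_isBasis' (hI : M.IsBasis' I X) : matroidRk M X = I.ncard := by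
  refine IsGreatest.csSup_eq ⟨⟨I, hI.indep, hI.subset, rfl⟩, ?_⟩
  rintro n ⟨J, hJ, hJX, rfl⟩
  have hle : J.encard ≤ I.encard := hI.encard_eq_eRk ▸ hJ.encard_le_eRk_of_subset hJX
  rw [Set.ncard_def, Set.ncard_def]
  exact ENat.toNat_le_toNat hle (Set.encard_ne_top_iff.mpr I.toFinite)

variable (M X) in
lemma natCast_matroidRk : (matroidRk M X : ℕ∞) = M.eRk X := by
  obtain ⟨I, hI⟩ := M.exists_isBasis' X
  rw [matroidRk_eq_ncard_of_isBasis' hI, ← hI.encard_eq_eRk, I.toFinite.cast_ncard_eq]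

end matroidRk

lemma IsChain.le_of_forall_lt_not {α : Type*} [PartialOrder α] {s : Set α} {p : α → Prop}
    {a b : α} (hs : IsChain (· ≤ ·) s) (ha : a ∈ s) (hmin : ∀ c ∈ s, c < a → ¬ p c)
    (hb : b ∈ s) (hpb : p b) : a ≤ b := by
  rcases hs.total hb ha with hba | hab
  · rcases hba.eq_or_lt with rfl | hlt
    · exact le_rfl
    · exact absurd hpb (hmin b hb hlt)
  · exact hab

lemma IsFlag.isChain {m : ℕ} {π : Finset (Finset (Fin m))} (hπ : IsFlag m π) :
    IsChain (· ≤ ·) (π : Set (Finset (Fin m))) :=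
  fun S hS T hT _ => hπ.2.2 S hS T hT

section Aflag

variable {m : ℕ} {M : Matroid (Fin m)} {u : Fin m → ℤ} {π : Finset (Finset (Fin m))}

lemma Aflag_eq_empty_of_one_lt_sum {S : Finset (Fin m)} (hS : S ∈ π)
    (hS1 : 1 < ∑ j ∈ S, u j) : Aflag m M u π = ∅ := by
  refine Set.eq_empty_iff_forall_notMem.mpr fun i hi => ?_
  have := hi S hS
  split_ifs at this <;> omega

lemma Aflag_eq_closure_of_isChain (hπ : IsChain (· ≤ ·) (π : Set (Finset (Fin m))))
    (hle : ∀ S ∈ π, ∑ j ∈ S, u j ≤ 1) {T : Finset (Fin m)} (hT : T ∈ π)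
    (hT1 : ∑ j ∈ T, u j = 1) (hmin : ∀ S ∈ π, S ⊂ T → ∑ j ∈ S, u j ≠ 1) :
    Aflag m M u π = M.closure (T : Set (Fin m)) := by
  ext i
  constructor
  · intro hi
    by_contra hiT
    have := hi T hT
    rw [if_neg hiT] at this
    omega
  · intro hiT S hS
    split_ifs with hiS
    · exact hle S hS
    · by_contra hpos
      have hS1 : ∑ j ∈ S, u j = 1 := le_antisymm (hle S hS) (by omega)
      have hTS : T ⊆ S := hπ.le_of_forall_lt_not hT hmin hS hS1
      exact hiS (M.closure_subset_closure (Finset.coe_subset.mpr hTS) hiT)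

end Aflag

theorem rank_sections_on_chart_general (m : ℕ) (M : Matroid (Fin m))
    (π : Finset (Finset (Fin m))) (hπ : IsFlag m π)
    (u : Fin m → ℤ) :
    ((∃ S ∈ π, 1 < ∑ j ∈ S, u j) → matroidRk M (Aflag m M u π) = 0) ∧
    ((∀ S ∈ π, (∑ j ∈ S, u j) ≤ 1) →
      ∀ T ∈ π, (∑ j ∈ T, u j) = 1 → (∀ S ∈ π, S ⊂ T → (∑ j ∈ S, u j) ≠ 1) →
        matroidRk M (Aflag m M u π) = matroidRk M (T : Set (Fin m))) := by
  constructor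
  · rintro ⟨S, hS, hS1⟩
    rw [Aflag_eq_empty_of_one_lt_sum hS hS1, ← Nat.cast_inj (R := ℕ∞), natCast_matroidRk,
      M.eRk_empty, Nat.cast_zero]
  · intro hle T hT hT1 hmin
    rw [Aflag_eq_closure_of_isChain hπ.isChain hle hT hT1 hmin, ← Nat.cast_inj (R := ℕ∞),
      natCast_matroidRk, natCast_matroidRk, M.eRk_closure_eq]

/-- Let `π` be a flag of subsets of `[m]` and `u ∈ ℤ^m` with `∑ u_j = 1`.  If some
member of `π` has `u`-sum `> 1`, then `rk_M(A_π(u)) = 0`.  Otherwise, if `T = S_t` is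
the first member of `π` whose `u`-sum equals `1` (i.e. `T ∈ π`, `∑_{j∈T} u_j = 1` and
no strictly smaller member of `π` has `u`-sum `1`), then
`rk_M(A_π(u)) = rk_M(S_t)`. -/
theorem rank_sections_on_chart (m : ℕ) (M : Matroid (Fin m)) (hE : M.E = Set.univ)
    (π : Finset (Finset (Fin m))) (hπ : IsFlag m π)
    (u : Fin m → ℤ) (hu : ∑ j, u j = 1) :
    ((∃ S ∈ π, 1 < ∑ j ∈ S, u j) → matroidRk M (Aflag m M u π) = 0) ∧
    ((∀ S ∈ π, (∑ j ∈ S, u j) ≤ 1) →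
      ∀ T ∈ π, (∑ j ∈ T, u j) = 1 → (∀ S ∈ π, S ⊂ T → (∑ j ∈ S, u j) ≠ 1) →
        matroidRk M (Aflag m M u π) = matroidRk M (T : Set (Fin m))) :=
  rank_sections_on_chart_general m M π hπ u
end

section
/- Let M be a matroid with ground set [m], let π be a flag of subsets of [m] with members ∅ ≠ S_1 ⊊ S_2 ⊊ ⋯ ⊊ S_l = [m], and let u ∈ ℤ^m with Σ_{j=1}^m u_j = 1. If Σ_{j∈S_k} u_j > 1 for some k, then A_π(u) = ∅. If instead Σ_{j∈S_k} u_j ≤ 1 for all k, then, letting t be the minimal index with Σ_{j∈S_t} u_j = 1, one has the set identity A_π(u) = cl_M(S_t). -/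
open scoped Classical

/-- Let `π` be a flag of subsets of `[m]` and `u ∈ ℤ^m` with `∑ u_j = 1`.  If some
member of `π` has `u`-sum `> 1`, then `A_π(u) = ∅`.  If instead all members of `π`
have `u`-sum `≤ 1` and `T = S_t` is the first member of `π` whose `u`-sum equals `1`,
then `A_π(u) = cl_M(S_t)`. -/
theorem sections_on_chart_eq_closure (m : ℕ) (M : Matroid (Fin m)) (hE : M.E = Set.univ)
    (π : Finset (Finset (Fin m))) (hπ : IsFlag m π)
    (u : Fin m → ℤ) (hu : ∑ j, u j = 1) :
    ((∃ S ∈ π, 1 < ∑ j ∈ S, u j) → Aflag m M u π = ∅) ∧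
    ((∀ S ∈ π, (∑ j ∈ S, u j) ≤ 1) →
      ∀ T ∈ π, (∑ j ∈ T, u j) = 1 → (∀ S ∈ π, S ⊂ T → (∑ j ∈ S, u j) ≠ 1) →
        Aflag m M u π = M.closure (T : Set (Fin m))) := by
  constructor
  · rintro ⟨S, hS, hgt⟩
    ext i
    simp only [Set.mem_empty_iff_false, iff_false]
    intro hi
    have := hi S hS
    split at this <;> omega
  · intro hle T hT hT1 hmin
    ext i
    constructor
    · intro hi
      have := hi T hT
      split at this
      · assumption
      · omega
    · intro hi S hS
      by_cases hcl : i ∈ M.closure (S : Set (Fin m))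
      · simp [hcl, hle S hS]
      · simp only [hcl, if_false]
        by_contra hpos
        have hS1 : (∑ j ∈ S, u j) = 1 := by have := hle S hS; omega
        rcases hπ.2.2 S hS T hT with h | h
        · rcases eq_or_ne S T with rfl | hne
          · exact hcl (by exact hi)
          · exact hmin S hS (HasSubset.Subset.ssubset_of_ne h hne) hS1
        · exact hcl (M.closure_subset_closure (by exact_mod_cast h) hi)
end

section
/- Let m ≥ 1, let S ⊆ [m] with |S| ≥ 2, and let i ∈ S. Then Σ_π (−1)^{m − l(π)} = 0, where the sum is over all flags π of subsets of [m] such that S ∈ π and S is the minimal member of π containing i. -/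
open scoped Classical

/-! Adding or removing `S \ {i}` is a sign-reversing involution on the flags of the sum:
`S \ {i}` is nonempty as `|S| ≥ 2`, and it is comparable with every member of such a flag,
since a member containing `i` lies above `S` and any other member lies below `S \ {i}`. -/

namespace Finset

variable {α : Type*} [DecidableEq α]

def toggle (a : α) (s : Finset α) : Finset α :=
  if a ∈ s then s.erase a else insert a s

theorem toggle_toggle (a : α) (s : Finset α) : toggle a (toggle a s) = s := by
  by_cases ha : a ∈ s <;> simp [toggle, ha]

theorem toggle_ne (a : α) (s : Finset α) : toggle a s ≠ s := by
  by_cases ha : a ∈ s <;> simp [toggle, ha, Finset.ext_iff]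

theorem card_toggle (a : α) (s : Finset α) :
    (toggle a s).card + 1 = s.card ∨ s.card + 1 = (toggle a s).card := by
  by_cases ha : a ∈ s
  · exact .inl (by simpa [toggle, ha] using card_erase_add_one ha)
  · exact .inr (by simp [toggle, ha, card_insert_of_notMem ha])

end Finset

theorem neg_one_pow_sub_eq_neg {m n : ℕ} (h : n < m) :
    (-1 : ℤ) ^ (m - n) = -(-1) ^ (m - (n + 1)) := by
  rw [show m - n = m - (n + 1) + 1 by omega, pow_succ, mul_neg_one]

namespace IsFlag

variable {m : ℕ} {π : Finset (Finset (Fin m))}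

theorem card_le (h : IsFlag m π) : π.card ≤ m := by
  obtain ⟨hne, -, hchain⟩ := h
  simpa using Finset.card_le_card_of_injOn Finset.card
    (t := Finset.Icc 1 m)
    (fun T hT => Finset.mem_Icc.2 ⟨(hne T hT).card_pos, by simpa using T.card_le_univ⟩)
    (fun T hT T' hT' hc => (hchain T hT T' hT').elim
      (Finset.eq_of_subset_of_card_le · hc.ge) (Finset.eq_of_subset_of_card_le · hc.le |>.symm))

theorem erase (h : IsFlag m π) {A : Finset (Fin m)} (hA : A ≠ Finset.univ) :
    IsFlag m (π.erase A) := by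
  obtain ⟨hne, huniv, hchain⟩ := h
  exact ⟨fun T hT => hne T (Finset.mem_of_mem_erase hT), Finset.mem_erase.2 ⟨hA.symm, huniv⟩,
    fun T hT T' hT' => hchain T (Finset.mem_of_mem_erase hT) T' (Finset.mem_of_mem_erase hT')⟩

theorem insert (h : IsFlag m π) {A : Finset (Fin m)} (hA : A.Nonempty)
    (hcomp : ∀ T ∈ π, A ⊆ T ∨ T ⊆ A) : IsFlag m (insert A π) := by
  obtain ⟨hne, huniv, hchain⟩ := h
  refine ⟨?_, Finset.mem_insert_of_mem huniv, ?_⟩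
  · simpa [hA] using hne
  · simp only [Finset.mem_insert, forall_eq_or_imp, subset_refl, true_or, true_and]
    exact ⟨hcomp, fun T hT => ⟨(hcomp T hT).symm, hchain T hT⟩⟩

end IsFlag

def IsFlagMinimalAt (m : ℕ) (S : Finset (Fin m)) (i : Fin m)
    (π : Finset (Finset (Fin m))) : Prop :=
  IsFlag m π ∧ S ∈ π ∧ ∀ T ∈ π, i ∈ T → S ⊆ T

theorem subset_erase_or_subset_of_minimal {m : ℕ} {π : Finset (Finset (Fin m))}
    (hchain : ∀ S ∈ π, ∀ T ∈ π, S ⊆ T ∨ T ⊆ S) {S : Finset (Fin m)} (hS : S ∈ π) {i : Fin m}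
    (hmin : ∀ T ∈ π, i ∈ T → S ⊆ T) {T : Finset (Fin m)} (hT : T ∈ π) :
    S.erase i ⊆ T ∨ T ⊆ S.erase i := by
  by_cases hiT : i ∈ T
  · exact .inl ((S.erase_subset i).trans (hmin T hT hiT))
  · refine (hchain S hS T hT).imp (S.erase_subset i).trans fun hTS x hx => ?_
    exact Finset.mem_erase.2 ⟨fun h => hiT (h ▸ hx), hTS hx⟩

theorem IsFlagMinimalAt.toggle_erase {m : ℕ} {S : Finset (Fin m)} {i : Fin m}
    {π : Finset (Finset (Fin m))} (hπ : IsFlagMinimalAt m S i π) (hS : 2 ≤ S.card) (hi : i ∈ S) :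
    IsFlagMinimalAt m S i (π.toggle (S.erase i)) := by
  obtain ⟨hflag, hSπ, hmin⟩ := hπ
  have hiA : i ∉ S.erase i := S.notMem_erase i
  unfold Finset.toggle
  split_ifs
  · exact ⟨hflag.erase fun h => hiA (h ▸ Finset.mem_univ i),
      Finset.mem_erase.2 ⟨(Finset.erase_ssubset hi).ne', hSπ⟩,
      fun T hT => hmin T (Finset.mem_of_mem_erase hT)⟩
  · have hAne : (S.erase i).Nonempty := by
      rw [← Finset.card_pos, Finset.card_erase_of_mem hi]
      omega
    refine ⟨hflag.insert hAne fun T hT => subset_erase_or_subset_of_minimal hflag.2.2 hSπ hmin hT,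
      Finset.mem_insert_of_mem hSπ, ?_⟩
    simpa [hiA] using hmin

theorem flags_minimal_member_vanishing_general (m : ℕ) (S : Finset (Fin m))
    (hS : 2 ≤ S.card) (i : Fin m) (hi : i ∈ S) :
    ∑ π ∈ Finset.univ.filter
        (fun π => IsFlag m π ∧ S ∈ π ∧ ∀ T ∈ π, i ∈ T → S ⊆ T),
      (-1 : ℤ) ^ (m - π.card) = 0 := by
  refine Finset.sum_involution (fun π _ => π.toggle (S.erase i)) (fun π hπ => ?_)
    (fun π _ _ => Finset.toggle_ne _ π)
    (fun π hπ => Finset.mem_filter.2 ⟨Finset.mem_univ _,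
      IsFlagMinimalAt.toggle_erase (Finset.mem_filter.1 hπ).2 hS hi⟩)
    (fun π _ => Finset.toggle_toggle _ π)
  have hπ : IsFlagMinimalAt m S i π := (Finset.mem_filter.1 hπ).2
  have hcard := hπ.1.card_le
  have hcard_toggle := (hπ.toggle_erase hS hi).1.card_le
  rcases Finset.card_toggle (S.erase i) π with h | h
  · rw [neg_one_pow_sub_eq_neg (n := (π.toggle (S.erase i)).card) (by omega), h, add_neg_cancel]
  · rw [neg_one_pow_sub_eq_neg (n := π.card) (by omega), h, neg_add_cancel]

/-- For `S ⊆ [m]` with `|S| ≥ 2` and `i ∈ S`, the signed count `∑_π (-1)^{m - l(π)}`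
over all flags `π` of subsets of `[m]` such that `S ∈ π` and `S` is the minimal
member of `π` containing `i` vanishes. -/
theorem flags_minimal_member_vanishing (m : ℕ) (hm : 1 ≤ m) (S : Finset (Fin m))
    (hS : 2 ≤ S.card) (i : Fin m) (hi : i ∈ S) :
    ∑ π ∈ Finset.univ.filter
        (fun π => IsFlag m π ∧ S ∈ π ∧ ∀ T ∈ π, i ∈ T → S ⊆ T),
      (-1 : ℤ) ^ (m - π.card) = 0 :=
  flags_minimal_member_vanishing_general m S hS i hi
end

section
/- Let m ≥ 1 and let u ∈ ℤ^m with Σ_{j=1}^m u_j = 1 and u_a < 0 for some a ∈ [m]. Then for every nonempty subset S ⊆ [m] with Σ_{j∈S} u_j = 1, one has Σ_{π ∈ Π_u(S)} (−1)^{m − l(π)} = 0. -/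
open scoped Classical

/-- `π ∈ Π_u(S)`: `π` is a flag containing `S`, all of whose members have `u`-sum
`≤ 1`, and `S` is the first member of `π` with `u`-sum equal to `1` (members strictly
below `S` have `u`-sum `≤ 0`). -/
def memPi (m : ℕ) (u : Fin m → ℤ) (S : Finset (Fin m)) (π : Finset (Finset (Fin m))) :
    Prop :=
  IsFlag m π ∧ S ∈ π ∧ (∀ T ∈ π, (∑ j ∈ T, u j) ≤ 1) ∧
    ∀ T ∈ π, T ⊂ S → (∑ j ∈ T, u j) ≤ 0

/-- The sup (= maximum) of the members of `π` avoiding `a`. -/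
noncomputable def flagP (m : ℕ) (a : Fin m) (π : Finset (Finset (Fin m))) :
    Finset (Fin m) :=
  (π.filter (fun T => a ∉ T)).sup id

/-- The set to be toggled by the involution. -/
noncomputable def flagQ (m : ℕ) (a : Fin m) (π : Finset (Finset (Fin m))) :
    Finset (Fin m) :=
  insert a (flagP m a π)

/-- The sign-reversing involution: toggle `flagQ`. -/
noncomputable def flagG (m : ℕ) (a : Fin m) (π : Finset (Finset (Fin m))) :
    Finset (Finset (Fin m)) :=
  if flagQ m a π ∈ π then π.erase (flagQ m a π) else insert (flagQ m a π) π

lemma sup_mem_of_chain {m : ℕ} (F : Finset (Finset (Fin m)))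
    (hc : ∀ S ∈ F, ∀ T ∈ F, S ⊆ T ∨ T ⊆ S) (hne : F.Nonempty) : F.sup id ∈ F := by
  obtain ⟨M, hM, hmax⟩ := F.exists_max_image Finset.card hne
  have hFM : F.sup id = M := by
    apply le_antisymm
    · refine Finset.sup_le fun T hT => ?_
      rcases hc T hT M hM with h | h
      · exact h
      · exact le_of_eq (Finset.eq_of_subset_of_card_le h (hmax T hT)).symm
    · exact Finset.le_sup (f := id) hM
  rw [hFM]; exact hM

lemma card_le_of_flag {m : ℕ} (π : Finset (Finset (Fin m))) (h : IsFlag m π) :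
    π.card ≤ m := by
  have h1 : ∀ x ∈ π, x.card ∈ Finset.Icc 1 m := by
    intro x hx
    simp only [Finset.mem_Icc]
    constructor
    · exact Finset.card_pos.2 (h.1 x hx)
    · simpa using Finset.card_le_univ x
  have h2 : Set.InjOn Finset.card (π : Set (Finset (Fin m))) := by
    intro x hx y hy hxy
    rcases h.2.2 x hx y hy with hs | hs
    · exact Finset.eq_of_subset_of_card_le hs (le_of_eq hxy.symm)
    · exact (Finset.eq_of_subset_of_card_le hs (le_of_eq hxy)).symm
  calc π.card ≤ (Finset.Icc 1 m).card := Finset.card_le_card_of_injOn Finset.card h1 h2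
    _ = m := by simp

/-- All the properties of the involution needed for `sum_involution`. -/
lemma flagG_spec {m : ℕ} (u : Fin m → ℤ) (hu : ∑ j, u j = 1) (a : Fin m) (ha : u a < 0)
    (S : Finset (Fin m)) (hsum : (∑ j ∈ S, u j) = 1)
    (π : Finset (Finset (Fin m))) (hπ : memPi m u S π) :
    memPi m u S (flagG m a π) ∧ flagG m a (flagG m a π) = π ∧
      (flagG m a π).card = π.card + 1 ∨
    memPi m u S (flagG m a π) ∧ flagG m a (flagG m a π) = π ∧
      π.card = (flagG m a π).card + 1 := by
  obtain ⟨⟨hne, huniv, hchain⟩, hSmem, hle1, hlt0⟩ := hπ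
  set P := flagP m a π with hP
  set Q := flagQ m a π with hQ
  have haP : a ∉ P := by
    rw [hP, flagP]
    intro hmem
    rw [Finset.mem_sup] at hmem
    obtain ⟨T, hT, haT⟩ := hmem
    exact (Finset.mem_filter.1 hT).2 (by simpa using haT)
  have haQ : a ∈ Q := Finset.mem_insert_self a P
  have hPQ : P ⊆ Q := Finset.subset_insert a P
  -- P is either ∅ or a member of π
  have hPmem : P = ∅ ∨ P ∈ π := by
    rcases Finset.eq_empty_or_nonempty (π.filter (fun T => a ∉ T)) with hF | hF
    · left; rw [hP, flagP, hF]; rfl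
    · right
      have := sup_mem_of_chain (π.filter (fun T => a ∉ T))
        (fun X hX Y hY => hchain X (Finset.mem_filter.1 hX).1 Y (Finset.mem_filter.1 hY).1) hF
      exact (Finset.mem_filter.1 this).1
  -- every member avoiding a is ⊆ P
  have hbelow : ∀ T ∈ π, a ∉ T → T ⊆ P := by
    intro T hT haT
    rw [hP, flagP]
    exact Finset.le_sup (f := id) (Finset.mem_filter.2 ⟨hT, haT⟩)
  -- every member containing a contains Q
  have habove : ∀ T ∈ π, a ∈ T → Q ⊆ T := by
    intro T hT haT
    rw [hQ, flagQ]
    refine Finset.insert_subset haT ?_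
    rcases hPmem with h' | h'
    · rw [← hP, h']; exact Finset.empty_subset T
    · rcases hchain P h' T hT with hs | hs
      · exact hs
      · exact absurd (hs haT) haP
  -- Q is comparable with everything in π
  have hcomp : ∀ T ∈ π, Q ⊆ T ∨ T ⊆ Q := by
    intro T hT
    by_cases haT : a ∈ T
    · exact Or.inl (habove T hT haT)
    · exact Or.inr ((hbelow T hT haT).trans hPQ)
  have hPsum1 : (∑ j ∈ P, u j) ≤ 1 := by
    rcases hPmem with h' | h'
    · rw [h']; simp
    · exact hle1 P h'
  have hQsum : (∑ j ∈ Q, u j) = u a + ∑ j ∈ P, u j := by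
    rw [hQ, flagQ, Finset.sum_insert haP]
  have hQ1 : (∑ j ∈ Q, u j) ≤ 1 := by rw [hQsum]; omega
  have hQ0 : Q ⊂ S → (∑ j ∈ Q, u j) ≤ 0 := by
    intro hQS
    have hPS : P ⊂ S := lt_of_le_of_lt hPQ hQS
    have hPsum0 : (∑ j ∈ P, u j) ≤ 0 := by
      rcases hPmem with h' | h'
      · rw [h']; simp
      · exact hlt0 P h' hPS
    rw [hQsum]; omega
  have hQnS : Q ≠ S := by
    intro h
    have h1 : (∑ j ∈ Q, u j) = 1 := by rw [h]; exact hsum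
    omega
  have hQnuniv : Q ≠ Finset.univ := by
    intro h
    have h1 : (∑ j ∈ Q, u j) = 1 := by rw [h]; exact hu
    omega
  have hQne : Q.Nonempty := ⟨a, haQ⟩
  -- filter is unchanged after toggling Q (since a ∈ Q)
  have hfilter_erase : (π.erase Q).filter (fun T => a ∉ T) = π.filter (fun T => a ∉ T) := by
    ext T
    simp only [Finset.mem_filter, Finset.mem_erase]
    constructor
    · rintro ⟨⟨_, hT⟩, h2⟩; exact ⟨hT, h2⟩
    · rintro ⟨hT, h2⟩
      exact ⟨⟨fun hTQ => h2 (hTQ ▸ haQ), hT⟩, h2⟩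
  have hfilter_insert : (insert Q π).filter (fun T => a ∉ T) = π.filter (fun T => a ∉ T) := by
    ext T
    simp only [Finset.mem_filter, Finset.mem_insert]
    constructor
    · rintro ⟨hT | hT, h2⟩
      · exact absurd (hT ▸ haQ) h2
      · exact ⟨hT, h2⟩
    · rintro ⟨hT, h2⟩; exact ⟨Or.inr hT, h2⟩
  by_cases hQmem : Q ∈ π
  · -- erase case
    right
    have hGdef : flagG m a π = π.erase Q := by rw [flagG]; simp [← hQ, hQmem]
    have hQG : flagQ m a (flagG m a π) = Q := by
      rw [flagQ, hGdef]
      rw [show flagP m a (π.erase Q) = P by rw [flagP, hfilter_erase]; rfl, hQ, flagQ, hP]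
    refine ⟨⟨⟨?_, ?_, ?_⟩, ?_, ?_, ?_⟩, ?_, ?_⟩
    · intro T hT; exact hne T (Finset.mem_of_mem_erase (hGdef ▸ hT))
    · rw [hGdef]; exact Finset.mem_erase.2 ⟨Ne.symm hQnuniv, huniv⟩
    · intro X hX Y hY
      rw [hGdef] at hX hY
      exact hchain X (Finset.mem_of_mem_erase hX) Y (Finset.mem_of_mem_erase hY)
    · rw [hGdef]; exact Finset.mem_erase.2 ⟨Ne.symm hQnS, hSmem⟩
    · intro T hT; exact hle1 T (Finset.mem_of_mem_erase (hGdef ▸ hT))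
    · intro T hT hTS; exact hlt0 T (Finset.mem_of_mem_erase (hGdef ▸ hT)) hTS
    · rw [hGdef, flagG, show flagQ m a (π.erase Q) = Q from hGdef ▸ hQG]
      have : Q ∉ π.erase Q := Finset.notMem_erase Q π
      rw [if_neg this, Finset.insert_erase hQmem]
    · rw [hGdef, Finset.card_erase_of_mem hQmem]
      have : 1 ≤ π.card := Finset.card_pos.2 ⟨Q, hQmem⟩
      omega
  · -- insert case
    left
    have hGdef : flagG m a π = insert Q π := by rw [flagG]; simp [← hQ, hQmem]
    have hQG : flagQ m a (flagG m a π) = Q := by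
      rw [flagQ, hGdef]
      rw [show flagP m a (insert Q π) = P by rw [flagP, hfilter_insert]; rfl, hQ, flagQ, hP]
    refine ⟨⟨⟨?_, ?_, ?_⟩, ?_, ?_, ?_⟩, ?_, ?_⟩
    · intro T hT
      rw [hGdef] at hT
      rcases Finset.mem_insert.1 hT with h | h
      · rw [h]; exact hQne
      · exact hne T h
    · rw [hGdef]; exact Finset.mem_insert_of_mem huniv
    · intro X hX Y hY
      rw [hGdef] at hX hY
      rcases Finset.mem_insert.1 hX with h | h <;> rcases Finset.mem_insert.1 hY with h' | h'
      · left; rw [h, h']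
      · rw [h]; exact hcomp Y h'
      · rw [h']; exact (hcomp X h).symm
      · exact hchain X h Y h'
    · rw [hGdef]; exact Finset.mem_insert_of_mem hSmem
    · intro T hT
      rw [hGdef] at hT
      rcases Finset.mem_insert.1 hT with h | h
      · rw [h]; exact hQ1
      · exact hle1 T h
    · intro T hT hTS
      rw [hGdef] at hT
      rcases Finset.mem_insert.1 hT with h | h
      · rw [h]; exact hQ0 (h ▸ hTS)
      · exact hlt0 T h hTS
    · rw [hGdef, flagG, show flagQ m a (insert Q π) = Q from hGdef ▸ hQG]
      have hmem : Q ∈ insert Q π := Finset.mem_insert_self Q π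
      rw [if_pos hmem, Finset.erase_insert hQmem]
    · rw [hGdef, Finset.card_insert_of_notMem hQmem]

/-- If `u ∈ ℤ^m` has `∑ u_j = 1` and some strictly negative coordinate, then for
every nonempty `S ⊆ [m]` with `∑_{j∈S} u_j = 1`, the signed count
`∑_{π ∈ Π_u(S)} (-1)^{m - l(π)}` vanishes. -/
theorem signed_count_Pi_vanishing (m : ℕ) (hm : 1 ≤ m) (u : Fin m → ℤ)
    (hu : ∑ j, u j = 1) (a : Fin m) (ha : u a < 0)
    (S : Finset (Fin m)) (hS : S.Nonempty) (hsum : (∑ j ∈ S, u j) = 1) :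
    ∑ π ∈ Finset.univ.filter (memPi m u S), (-1 : ℤ) ^ (m - π.card) = 0 := by
  have hmem : ∀ π, π ∈ Finset.univ.filter (memPi m u S) ↔ memPi m u S π := by
    intro π; simp [Finset.mem_filter]
  refine Finset.sum_involution (fun π _ => flagG m a π) ?_ ?_ ?_ ?_
  · intro π hπ
    rcases flagG_spec u hu a ha S hsum π ((hmem π).1 hπ) with ⟨h1, _, h3⟩ | ⟨h1, _, h3⟩
    · have hc : (flagG m a π).card ≤ m := card_le_of_flag _ h1.1
      have : m - π.card = (m - (flagG m a π).card) + 1 := by omega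
      rw [this, pow_succ]; ring
    · have hc : π.card ≤ m := card_le_of_flag _ (((hmem π).1 hπ)).1
      have : m - (flagG m a π).card = (m - π.card) + 1 := by omega
      rw [this, pow_succ]; ring
  · intro π hπ _
    rcases flagG_spec u hu a ha S hsum π ((hmem π).1 hπ) with ⟨_, _, h3⟩ | ⟨_, _, h3⟩ <;>
      · intro h
        have h' : flagG m a π = π := h
        rw [h'] at h3; omega
  · intro π hπ
    rcases flagG_spec u hu a ha S hsum π ((hmem π).1 hπ) with ⟨h1, _, _⟩ | ⟨h1, _, _⟩ <;>
      exact (hmem _).2 h1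
  · intro π hπ
    rcases flagG_spec u hu a ha S hsum π ((hmem π).1 hπ) with ⟨_, h2, _⟩ | ⟨_, h2, _⟩ <;> exact h2
end
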